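/- arXiv:0902.2791 — 3 statements merged into one kernel-verified Lean document; each statement's English description precedes it below -/
import Mathlib

section
/- Let $H_L$, $H_R$ be symmetric positive definite matrices and $I_{F2C}$, $I_{C2F}$ matrices satisfying $H_R I_{C2F} = I_{F2C}^T H_L$. If additionally $H_L(I - I_{F2C} I_{C2F}) \geq 0$ and $H_R(I - I_{C2F} I_{F2C}) \geq 0$ (as symmetric matrices, positive semi-definite), then the block matrix $X = \begin{pmatrix} H_L & -H_L I_{F2C} \\ -H_R I_{C2F} & H_R \end{pmatrix}$ is positive semi-definite. -/
open Matrix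

/- Once `H_L` is factored out of the off-diagonal block, the Schur complement
`H_R - (H_L I_{F2C})ᵀ H_L⁻¹ (H_L I_{F2C}) = H_R - I_{F2C}ᵀ H_L I_{F2C}` no longer involves `H_L⁻¹`,
and the SBP relation `H_R I_{C2F} = I_{F2C}ᵀ H_L` turns it into `H_R (I - I_{C2F} I_{F2C})`. -/

namespace Matrix

variable {m n K : Type*} [Fintype m] [DecidableEq m] [Fintype n]
  [Field K] [PartialOrder K] [StarRing K] [StarOrderedRing K]

theorem PosDef.posSemidef_fromBlocks_mul_iff {A : Matrix m m K} (hA : A.PosDef)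
    (B : Matrix m n K) (D : Matrix n n K) :
    (fromBlocks A (A * B) (A * B)ᴴ D).PosSemidef ↔ (D - Bᴴ * A * B).PosSemidef := by
  let := hA.isUnit.invertible
  have hschur : (A * B)ᴴ * A⁻¹ * (A * B) = Bᴴ * A * B := by
    rw [conjTranspose_mul, hA.isHermitian.eq, Matrix.mul_assoc, Matrix.mul_assoc,
      inv_mul_cancel_left_of_invertible, Matrix.mul_assoc]
  rw [PosDef.fromBlocks₁₁ _ _ hA, hschur]

end Matrix

theorem stmt_6_general {nL nR : ℕ}
    (HL : Matrix (Fin nL) (Fin nL) ℝ) (HR : Matrix (Fin nR) (Fin nR) ℝ)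
    (IF2C : Matrix (Fin nL) (Fin nR) ℝ) (IC2F : Matrix (Fin nR) (Fin nL) ℝ)
    (hHL : HL.PosDef)
    (hSBP : HR * IC2F = IF2Cᵀ * HL)
    (h₂ : (HR * (1 - IC2F * IF2C)).PosSemidef) :
    (Matrix.fromBlocks HL (-(HL * IF2C)) (-(HR * IC2F)) HR).PosSemidef := by
  have hoff : (HL * -IF2C)ᴴ = -(HR * IC2F) := by
    rw [conjTranspose_mul, hHL.isHermitian.eq, conjTranspose_neg,
      conjTranspose_eq_transpose_of_trivial, hSBP, Matrix.neg_mul]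
  have hschur : HR - (-IF2C)ᴴ * HL * -IF2C = HR * (1 - IC2F * IF2C) := by
    rw [conjTranspose_neg, conjTranspose_eq_transpose_of_trivial, Matrix.neg_mul, Matrix.neg_mul,
      Matrix.mul_neg, neg_neg, ← hSBP, Matrix.mul_sub, Matrix.mul_one, Matrix.mul_assoc]
  rw [← Matrix.mul_neg, ← hoff, hHL.posSemidef_fromBlocks_mul_iff, hschur]
  exact h₂

/-- With SBP-preserving interpolation and nonnegative Schur-complement-type
conditions, the interface block matrix `X` is positive semi-definite. -/
theorem stmt_6 {nL nR : ℕ}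
    (HL : Matrix (Fin nL) (Fin nL) ℝ) (HR : Matrix (Fin nR) (Fin nR) ℝ)
    (IF2C : Matrix (Fin nL) (Fin nR) ℝ) (IC2F : Matrix (Fin nR) (Fin nL) ℝ)
    (hHL : HL.PosDef) (hHR : HR.PosDef)
    (hSBP : HR * IC2F = IF2Cᵀ * HL)
    (h₁ : (HL * (1 - IF2C * IC2F)).PosSemidef)
    (h₂ : (HR * (1 - IC2F * IF2C)).PosSemidef) :
    (Matrix.fromBlocks HL (-(HL * IF2C)) (-(HR * IC2F)) HR).PosSemidef :=
  stmt_6_general HL HR IF2C IC2F hHL hSBP h₂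
end

section
/- Consider the interface term $IT = -u^T(A\otimes H_L)u + v^T(A\otimes H_R)v + 2u^T(\Sigma_L \otimes H_L)u + 2v^T(\Sigma_R \otimes H_R)v - u^T(\Sigma_L \otimes H_L I_{F2C})v - v^T(\Sigma_R \otimes H_R I_{C2F})u - u^T(\Sigma_R \otimes I_{C2F}^T H_R)v - v^T(\Sigma_L \otimes I_{F2C}^T H_L)u$. If $2\Sigma_L = A$, $2\Sigma_R = -A$, and $H_R I_{C2F} = I_{F2C}^T H_L$, then $IT = 0$ for all vectors $u, v$. -/
open Matrix Kronecker

lemma dot_mulVec_swap {m n : Type*} [Fintype m] [Fintype n] (M : Matrix m n ℝ)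
    (x : m → ℝ) (y : n → ℝ) :
    x ⬝ᵥ (M *ᵥ y) = y ⬝ᵥ (Mᵀ *ᵥ x) := by
  rw [Matrix.dotProduct_mulVec, dotProduct_comm, ← Matrix.mulVec_transpose]

/-- Lemma 1 computation: with `2Σ_L = A`, `2Σ_R = -A` and the SBP-preserving
condition `H_R I_{C2F} = I_{F2C}ᵀ H_L`, the interface term `IT` vanishes. -/
theorem stmt_13 {k nL nR : ℕ}
    (A SigL SigR : Matrix (Fin k) (Fin k) ℝ)
    (HL : Matrix (Fin nL) (Fin nL) ℝ) (HR : Matrix (Fin nR) (Fin nR) ℝ)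
    (IF2C : Matrix (Fin nL) (Fin nR) ℝ) (IC2F : Matrix (Fin nR) (Fin nL) ℝ)
    (hA : A.IsSymm) (hSigL : SigL.IsSymm) (hSigR : SigR.IsSymm)
    (hHL : HL.PosDef) (hHR : HR.PosDef)
    (hL : (2 : ℝ) • SigL = A) (hRc : (2 : ℝ) • SigR = -A)
    (hSBP : HR * IC2F = IF2Cᵀ * HL)
    (u : Fin k × Fin nL → ℝ) (v : Fin k × Fin nR → ℝ) :
    -(u ⬝ᵥ ((A ⊗ₖ HL) *ᵥ u)) + v ⬝ᵥ ((A ⊗ₖ HR) *ᵥ v)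
      + 2 * (u ⬝ᵥ ((SigL ⊗ₖ HL) *ᵥ u)) + 2 * (v ⬝ᵥ ((SigR ⊗ₖ HR) *ᵥ v))
      - u ⬝ᵥ ((SigL ⊗ₖ (HL * IF2C)) *ᵥ v)
      - v ⬝ᵥ ((SigR ⊗ₖ (HR * IC2F)) *ᵥ u)
      - u ⬝ᵥ ((SigR ⊗ₖ (IC2Fᵀ * HR)) *ᵥ v)
      - v ⬝ᵥ ((SigL ⊗ₖ (IF2Cᵀ * HL)) *ᵥ u) = 0 := by
  have hHLs : HLᵀ = HL := hHL.isHermitian.eq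
  have hHRs : HRᵀ = HR := hHR.isHermitian.eq
  have hSigL' : SigL = (1/2 : ℝ) • A := by
    rw [← hL, smul_smul]; norm_num
  have hSigR' : SigR = (-(1/2) : ℝ) • A := by
    have h2 : (2 : ℝ) • SigR = (2 : ℝ) • ((-(1/2) : ℝ) • A) := by
      rw [hRc, smul_smul]; norm_num
    exact smul_right_injective _ two_ne_zero h2
  have hSBP' : IC2Fᵀ * HR = HL * IF2C := by
    have := congrArg Matrix.transpose hSBP
    simpa [Matrix.transpose_mul, hHRs, hHLs] using this
  subst hSigL' hSigR'
  rw [hSBP', hSBP]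
  have h1 : v ⬝ᵥ ((((-(1/2) : ℝ) • A) ⊗ₖ (IF2Cᵀ * HL)) *ᵥ u)
      = u ⬝ᵥ ((((-(1/2) : ℝ) • A) ⊗ₖ (HL * IF2C)) *ᵥ v) := by
    rw [dot_mulVec_swap]
    congr 1
    rw [Matrix.smul_kronecker, Matrix.transpose_smul, ← Matrix.kroneckerMap_transpose,
      hA.eq, Matrix.transpose_mul, hHLs, Matrix.smul_kronecker, Matrix.transpose_transpose]
  have h2 : v ⬝ᵥ ((((1/2 : ℝ) • A) ⊗ₖ (IF2Cᵀ * HL)) *ᵥ u)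
      = u ⬝ᵥ ((((1/2 : ℝ) • A) ⊗ₖ (HL * IF2C)) *ᵥ v) := by
    rw [dot_mulVec_swap]
    congr 1
    rw [Matrix.smul_kronecker, Matrix.transpose_smul, ← Matrix.kroneckerMap_transpose,
      hA.eq, Matrix.transpose_mul, hHLs, Matrix.smul_kronecker, Matrix.transpose_transpose]
  rw [h1, h2]
  simp only [Matrix.smul_kronecker, Matrix.smul_mulVec, dotProduct_smul,
    smul_eq_mul]
  ring
end

section
/- With $IT$ as in the previous statement, if $\Sigma_L = A^-$, $\Sigma_R = -A^+$ (where $2A^{\pm} = A \pm \bar A$ for the symmetric matrix $A$), and $H_R I_{C2F} = I_{F2C}^T H_L$, then $IT = -w^T(\bar A \otimes X)w$ where $w = (u, v)^T$ and $X = \begin{pmatrix} H_L & -H_L I_{F2C} \\ -H_R I_{C2F} & H_R \end{pmatrix}$ (up to the appropriate block reordering identifying $\mathbb{R}^k \otimes \mathbb{R}^{n_L+n_R}$ with $\mathbb{R}^{kn_L} \times \mathbb{R}^{kn_R}$). Consequently, if additionally $X \geq 0$ then $IT \leq 0$. -/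
/-!
Substituting `Σ_L = (A - Ā)/2` and `Σ_R = -(A + Ā)/2`, every term carrying `A` cancels: the
diagonal ones directly, the coupling ones because `H_R I_{C2F} = I_{F2C}ᵀ H_L` and its transpose
`I_{C2F}ᵀ H_R = H_L I_{F2C}` make the two coupling terms of each pair carry the same block.
What is left is the block expansion of `-wᵀ(Ā ⊗ X)w`. Finally `Ā = R |Λ| Rᵀ` is positive
semidefinite, so `Ā ⊗ X ≥ 0` whenever `X ≥ 0`.
-/

open Matrix Kronecker

namespace Matrix

variable {α ι l m n p : Type*}

theorem neg_kronecker [Mul α] [HasDistribNeg α] (A : Matrix l m α) (B : Matrix n p α) :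
    (-A) ⊗ₖ B = -(A ⊗ₖ B) := by
  ext; simp

theorem kronecker_neg [Mul α] [HasDistribNeg α] (A : Matrix l m α) (B : Matrix n p α) :
    A ⊗ₖ (-B) = -(A ⊗ₖ B) := by
  ext; simp

theorem sub_kronecker [NonUnitalNonAssocRing α] (A₁ A₂ : Matrix l m α) (B : Matrix n p α) :
    (A₁ - A₂) ⊗ₖ B = A₁ ⊗ₖ B - A₂ ⊗ₖ B := by
  ext; simp [sub_mul]

theorem dotProduct_kronecker_fromBlocks_mulVec [Fintype ι] [Fintype m] [Fintype n]
    [CommRing α] (M : Matrix ι ι α) (B₁₁ : Matrix m m α) (B₁₂ : Matrix m n α)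
    (B₂₁ : Matrix n m α) (B₂₂ : Matrix n n α) (u : ι × m → α) (v : ι × n → α)
    (w : ι × (m ⊕ n) → α)
    (hw : ∀ p, w p = Sum.elim (fun j => u (p.1, j)) (fun j => v (p.1, j)) p.2) :
    w ⬝ᵥ ((M ⊗ₖ fromBlocks B₁₁ B₁₂ B₂₁ B₂₂) *ᵥ w)
      = u ⬝ᵥ ((M ⊗ₖ B₁₁) *ᵥ u) + u ⬝ᵥ ((M ⊗ₖ B₁₂) *ᵥ v)
      + v ⬝ᵥ ((M ⊗ₖ B₂₁) *ᵥ u) + v ⬝ᵥ ((M ⊗ₖ B₂₂) *ᵥ v) := by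
  simp only [dotProduct, mulVec, Fintype.sum_prod_type, Fintype.sum_sum_type, hw,
    Sum.elim_inl, Sum.elim_inr, kroneckerMap_apply, fromBlocks_apply₁₁, fromBlocks_apply₁₂,
    fromBlocks_apply₂₁, fromBlocks_apply₂₂, mul_add, Finset.sum_add_distrib]
  ring

end Matrix

theorem stmt_14_general {k nL nR : ℕ}
    (A R : Matrix (Fin k) (Fin k) ℝ) (d : Fin k → ℝ)
    (Abar Aplus Aminus SigL SigR : Matrix (Fin k) (Fin k) ℝ)
    (hAbar : Abar = R * diagonal (fun i => |d i|) * Rᵀ)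
    (hAplus : Aplus = (1 / 2 : ℝ) • (A + Abar))
    (hAminus : Aminus = (1 / 2 : ℝ) • (A - Abar))
    (hSigL : SigL = Aminus) (hSigR : SigR = -Aplus)
    (HL : Matrix (Fin nL) (Fin nL) ℝ) (HR : Matrix (Fin nR) (Fin nR) ℝ)
    (IF2C : Matrix (Fin nL) (Fin nR) ℝ) (IC2F : Matrix (Fin nR) (Fin nL) ℝ)
    (hHL : HL.PosDef) (hHR : HR.PosDef)
    (hSBP : HR * IC2F = IF2Cᵀ * HL)
    (u : Fin k × Fin nL → ℝ) (v : Fin k × Fin nR → ℝ)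
    (X : Matrix (Fin nL ⊕ Fin nR) (Fin nL ⊕ Fin nR) ℝ)
    (hX : X = Matrix.fromBlocks HL (-(HL * IF2C)) (-(HR * IC2F)) HR)
    (w : Fin k × (Fin nL ⊕ Fin nR) → ℝ)
    (hw : ∀ p, w p = Sum.elim (fun j => u (p.1, j)) (fun j => v (p.1, j)) p.2)
    (IT : ℝ)
    (hIT : IT =
      -(u ⬝ᵥ ((A ⊗ₖ HL) *ᵥ u)) + v ⬝ᵥ ((A ⊗ₖ HR) *ᵥ v)
      + 2 * (u ⬝ᵥ ((SigL ⊗ₖ HL) *ᵥ u)) + 2 * (v ⬝ᵥ ((SigR ⊗ₖ HR) *ᵥ v))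
      - u ⬝ᵥ ((SigL ⊗ₖ (HL * IF2C)) *ᵥ v)
      - v ⬝ᵥ ((SigR ⊗ₖ (HR * IC2F)) *ᵥ u)
      - u ⬝ᵥ ((SigR ⊗ₖ (IC2Fᵀ * HR)) *ᵥ v)
      - v ⬝ᵥ ((SigL ⊗ₖ (IF2Cᵀ * HL)) *ᵥ u)) :
    IT = -(w ⬝ᵥ ((Abar ⊗ₖ X) *ᵥ w)) ∧ (X.PosSemidef → IT ≤ 0) := by
  have hSBP_transpose : IC2Fᵀ * HR = HL * IF2C := by
    simpa [← conjTranspose_eq_transpose_of_trivial, hHL.isHermitian.eq, hHR.isHermitian.eq]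
      using congrArg transpose hSBP
  have hIT_eq : IT = -(w ⬝ᵥ ((Abar ⊗ₖ X) *ᵥ w)) := by
    subst hSigL hSigR hAplus hAminus hX
    rw [hIT, dotProduct_kronecker_fromBlocks_mulVec _ _ _ _ _ u v w hw, hSBP_transpose, ← hSBP]
    simp only [add_kronecker, sub_kronecker, neg_kronecker, kronecker_neg, smul_kronecker,
      add_mulVec, sub_mulVec, neg_mulVec, smul_mulVec, dotProduct_add, dotProduct_sub,
      dotProduct_neg, dotProduct_smul, smul_eq_mul]
    ring
  refine ⟨hIT_eq, fun hXpsd => ?_⟩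
  have hAbar_psd : Abar.PosSemidef := by
    simpa [hAbar] using
      (PosSemidef.diagonal fun i => abs_nonneg (d i)).mul_mul_conjTranspose_same R
  simpa [hIT_eq] using (hAbar_psd.kronecker hXpsd).dotProduct_mulVec_nonneg w

/-- Lemma 2 computation: with the characteristic choice `Σ_L = A⁻`,
`Σ_R = -A⁺` and SBP-preserving interpolation, the interface term equals
`-wᵀ(Ā ⊗ X)w`; hence `X ≥ 0` implies `IT ≤ 0`. -/
theorem stmt_14 {k nL nR : ℕ}
    (A R : Matrix (Fin k) (Fin k) ℝ) (d : Fin k → ℝ)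
    (hR : R * Rᵀ = 1) (hA : A = R * diagonal d * Rᵀ)
    (Abar Aplus Aminus SigL SigR : Matrix (Fin k) (Fin k) ℝ)
    (hAbar : Abar = R * diagonal (fun i => |d i|) * Rᵀ)
    (hAplus : Aplus = (1 / 2 : ℝ) • (A + Abar))
    (hAminus : Aminus = (1 / 2 : ℝ) • (A - Abar))
    (hSigL : SigL = Aminus) (hSigR : SigR = -Aplus)
    (HL : Matrix (Fin nL) (Fin nL) ℝ) (HR : Matrix (Fin nR) (Fin nR) ℝ)
    (IF2C : Matrix (Fin nL) (Fin nR) ℝ) (IC2F : Matrix (Fin nR) (Fin nL) ℝ)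
    (hHL : HL.PosDef) (hHR : HR.PosDef)
    (hSBP : HR * IC2F = IF2Cᵀ * HL)
    (u : Fin k × Fin nL → ℝ) (v : Fin k × Fin nR → ℝ)
    (X : Matrix (Fin nL ⊕ Fin nR) (Fin nL ⊕ Fin nR) ℝ)
    (hX : X = Matrix.fromBlocks HL (-(HL * IF2C)) (-(HR * IC2F)) HR)
    (w : Fin k × (Fin nL ⊕ Fin nR) → ℝ)
    (hw : ∀ p, w p = Sum.elim (fun j => u (p.1, j)) (fun j => v (p.1, j)) p.2)
    (IT : ℝ)
    (hIT : IT =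
      -(u ⬝ᵥ ((A ⊗ₖ HL) *ᵥ u)) + v ⬝ᵥ ((A ⊗ₖ HR) *ᵥ v)
      + 2 * (u ⬝ᵥ ((SigL ⊗ₖ HL) *ᵥ u)) + 2 * (v ⬝ᵥ ((SigR ⊗ₖ HR) *ᵥ v))
      - u ⬝ᵥ ((SigL ⊗ₖ (HL * IF2C)) *ᵥ v)
      - v ⬝ᵥ ((SigR ⊗ₖ (HR * IC2F)) *ᵥ u)
      - u ⬝ᵥ ((SigR ⊗ₖ (IC2Fᵀ * HR)) *ᵥ v)
      - v ⬝ᵥ ((SigL ⊗ₖ (IF2Cᵀ * HL)) *ᵥ u)) :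
    IT = -(w ⬝ᵥ ((Abar ⊗ₖ X) *ᵥ w)) ∧ (X.PosSemidef → IT ≤ 0) :=
  stmt_14_general A R d Abar Aplus Aminus SigL SigR hAbar hAplus hAminus hSigL hSigR HL HR IF2C IC2F
    hHL hHR hSBP u v X hX w hw IT hIT
end
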